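/- arXiv:2005.10058 — 2 statements merged into one kernel-verified Lean document; each statement's English description precedes it below -/
import Mathlib

section
/- Every tensor term expression is congruent to a normal term expression, i.e., one containing no bound indices. -/
set_option autoImplicit false

namespace TensorPaper

/-- Tensor term expressions over a terminal alphabet `T` and index set `ι`.
`elem w i j` is the word `w` with lower (left) index `i` and upper (right) index `j`;
`loop w` is a closed loop; `one` is the empty product. -/
inductive Expr (T ι : Type) : Type
  | one : Expr T ι
  | elem : List T → ι → ι → Expr T ι
  | loop : List T → Expr T ι
  | mul : Expr T ι → Expr T ι → Expr T ι

namespace Expr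

variable {T ι : Type}

def rename (f : ι → ι) : Expr T ι → Expr T ι
  | one => one
  | elem w i j => elem w (f i) (f j)
  | loop w => loop w
  | mul t s => mul (rename f t) (rename f s)

variable [DecidableEq ι]

/-- number of occurrences of `k` as an upper index -/
def supCount : Expr T ι → ι → ℕ
  | one, _ => 0
  | elem _ _ j, k => if j = k then 1 else 0
  | loop _, _ => 0
  | mul t s, k => supCount t k + supCount s k

/-- number of occurrences of `k` as a lower index -/
def subCount : Expr T ι → ι → ℕ
  | one, _ => 0
  | elem _ i _, k => if i = k then 1 else 0
  | loop _, _ => 0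
  | mul t s, k => subCount t k + subCount s k

/-- each index occurs at most once as an upper and at most once as a lower index -/
def WellFormed (t : Expr T ι) : Prop := ∀ k, supCount t k ≤ 1 ∧ subCount t k ≤ 1

def Occurs (t : Expr T ι) (k : ι) : Prop := supCount t k ≠ 0 ∨ subCount t k ≠ 0

/-- free upper indices -/
def FSup (t : Expr T ι) : Set ι := {k | supCount t k = 1 ∧ subCount t k = 0}

/-- free lower indices -/
def FSub (t : Expr T ι) : Set ι := {k | subCount t k = 1 ∧ supCount t k = 0}

/-- a term expression is normal if it has no bound indices -/
def Normal (t : Expr T ι) : Prop := ∀ k, supCount t k = 0 ∨ subCount t k = 0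

def LoopFree : Expr T ι → Prop
  | one => True
  | elem _ i j => i ≠ j
  | loop _ => False
  | mul t s => LoopFree t ∧ LoopFree s

end Expr

/-- Congruence of tensor term expressions. -/
inductive Cong {T ι : Type} : Expr T ι → Expr T ι → Prop
  | refl (t : Expr T ι) : Cong t t
  | symm {t s : Expr T ι} : Cong t s → Cong s t
  | trans {t s u : Expr T ι} : Cong t s → Cong s u → Cong t u
  | mul_congr {t t' s s' : Expr T ι} : Cong t t' → Cong s s' →
      Cong (.mul t s) (.mul t' s')
  | assoc (t s u : Expr T ι) : Cong (.mul (.mul t s) u) (.mul t (.mul s u))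
  | comm (t s : Expr T ι) : Cong (.mul t s) (.mul s t)
  | one_mul (t : Expr T ι) : Cong (.mul .one t) t
  | concat (u v : List T) (i j k : ι) : i ≠ j → j ≠ k →
      Cong (.mul (.elem u i j) (.elem v j k)) (.elem (u ++ v) i k)
  | loopify (u : List T) (i : ι) : Cong (.elem u i i) (.loop u)
  | rot (a : T) (w : List T) : Cong (.loop (a :: w)) (.loop (w ++ [a]))

/-- the Kronecker delta `δ_i^j` (empty word with lower index `i` and upper index `j`) -/
def delta {T ι : Type} (i j : ι) : Expr T ι := .elem [] i j

/-- product of Kronecker deltas pairing corresponding lower and upper indices -/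
def deltasLU {T ι : Type} (lowers uppers : List ι) : Expr T ι :=
  (lowers.zip uppers).foldr (fun p acc => .mul (.elem [] p.1 p.2) acc) .one

/-- a tensor term is regular if it is congruent to a normal loop-free product of
elementary regular expressions with no repeated index -/
def Regular {T ι : Type} [DecidableEq ι] (t : Expr T ι) : Prop :=
  ∃ s : Expr T ι, Cong t s ∧ s.WellFormed ∧ s.Normal ∧ s.LoopFree

end TensorPaper

/- A bound index `j` sits on two factors `[u]ᵢʲ` and `[v]ⱼᵏ` of the product, which
associativity and commutativity bring side by side; they are then merged into `[uv]ᵢᵏ`, or,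
when both occurrences of `j` are on the same factor, `[u]ⱼʲ` is closed into the loop `[u]`.
Either way the number of elementary factors drops by one and the expression stays well formed,
so the process stops at a normal expression. -/

namespace TensorPaper

namespace Expr

variable {T ι : Type}

def elemCount : Expr T ι → ℕ
  | one => 0
  | elem _ _ _ => 1
  | loop _ => 0
  | mul t s => elemCount t + elemCount s

def factors : Expr T ι → List (Expr T ι)
  | one => []
  | elem w i j => [elem w i j]
  | loop w => [loop w]
  | mul t s => factors t ++ factors s

variable [DecidableEq ι]

theorem exists_elem_mem_factors_of_supCount_ne_zero {t : Expr T ι} {j : ι}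
    (h : t.supCount j ≠ 0) : ∃ u i, elem u i j ∈ t.factors := by
  induction t with
  | one => simp [supCount] at h
  | elem u i j' =>
    obtain rfl : j' = j := by simpa [supCount] using h
    exact ⟨u, i, List.mem_singleton_self _⟩
  | loop => simp [supCount] at h
  | mul t s iht ihs =>
    simp only [factors, List.mem_append]
    by_cases ht : t.supCount j = 0
    · obtain ⟨u, i, hu⟩ := ihs (by simpa [supCount, ht] using h)
      exact ⟨u, i, .inr hu⟩
    · obtain ⟨u, i, hu⟩ := iht ht
      exact ⟨u, i, .inl hu⟩

theorem exists_elem_mem_factors_of_subCount_ne_zero {t : Expr T ι} {j : ι}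
    (h : t.subCount j ≠ 0) : ∃ v k, elem v j k ∈ t.factors := by
  induction t with
  | one => simp [subCount] at h
  | elem v j' k =>
    obtain rfl : j' = j := by simpa [subCount] using h
    exact ⟨v, k, List.mem_singleton_self _⟩
  | loop => simp [subCount] at h
  | mul t s iht ihs =>
    simp only [factors, List.mem_append]
    by_cases ht : t.subCount j = 0
    · obtain ⟨v, k, hv⟩ := ihs (by simpa [subCount, ht] using h)
      exact ⟨v, k, .inr hv⟩
    · obtain ⟨v, k, hv⟩ := iht ht
      exact ⟨v, k, .inl hv⟩

theorem WellFormed.of_counts_le {s t : Expr T ι} (ht : t.WellFormed)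
    (hle : ∀ k, s.supCount k ≤ t.supCount k ∧ s.subCount k ≤ t.subCount k) : s.WellFormed :=
  fun k => ⟨(hle k).1.trans (ht k).1, (hle k).2.trans (ht k).2⟩

end Expr

inductive ACEquiv {T ι : Type} : Expr T ι → Expr T ι → Prop
  | refl (t : Expr T ι) : ACEquiv t t
  | symm {t s : Expr T ι} : ACEquiv t s → ACEquiv s t
  | trans {t s u : Expr T ι} : ACEquiv t s → ACEquiv s u → ACEquiv t u
  | mul_congr {t t' s s' : Expr T ι} : ACEquiv t t' → ACEquiv s s' →
      ACEquiv (.mul t s) (.mul t' s')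
  | assoc (t s u : Expr T ι) : ACEquiv (.mul (.mul t s) u) (.mul t (.mul s u))
  | comm (t s : Expr T ι) : ACEquiv (.mul t s) (.mul s t)
  | one_mul (t : Expr T ι) : ACEquiv (.mul .one t) t

namespace ACEquiv

variable {T ι : Type} {t s : Expr T ι}

theorem cong (h : ACEquiv t s) : Cong t s := by
  induction h with
  | refl t => exact .refl t
  | symm _ ih => exact ih.symm
  | trans _ _ ih₁ ih₂ => exact ih₁.trans ih₂
  | mul_congr _ _ ih₁ ih₂ => exact ih₁.mul_congr ih₂
  | assoc t s u => exact .assoc t s u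
  | comm t s => exact .comm t s
  | one_mul t => exact .one_mul t

theorem map_eq {M : Type} [AddCommMonoid M] {f : Expr T ι → M} (h_one : f .one = 0)
    (h_mul : ∀ a b, f (.mul a b) = f a + f b) (h : ACEquiv t s) : f t = f s := by
  induction h with
  | refl => rfl
  | symm _ ih => exact ih.symm
  | trans _ _ ih₁ ih₂ => exact ih₁.trans ih₂
  | mul_congr _ _ ih₁ ih₂ => rw [h_mul, h_mul, ih₁, ih₂]
  | assoc => simp only [h_mul, add_assoc]
  | comm => simp only [h_mul, add_comm]
  | one_mul => simp only [h_mul, h_one, zero_add]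

theorem elemCount_eq (h : ACEquiv t s) : t.elemCount = s.elemCount :=
  h.map_eq rfl fun _ _ => rfl

theorem supCount_eq [DecidableEq ι] (h : ACEquiv t s) : t.supCount = s.supCount :=
  h.map_eq (f := Expr.supCount) rfl fun _ _ => rfl

theorem subCount_eq [DecidableEq ι] (h : ACEquiv t s) : t.subCount = s.subCount :=
  h.map_eq (f := Expr.subCount) rfl fun _ _ => rfl

theorem mul_right_reassoc {a r : Expr T ι} (h : ACEquiv t (.mul a r)) (s : Expr T ι) :
    ACEquiv (.mul t s) (.mul a (.mul r s)) :=
  (h.mul_congr (.refl s)).trans (.assoc a r s)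

theorem exists_of_mem_factors {a : Expr T ι} (ha : a ∈ t.factors) :
    ∃ r, ACEquiv t (.mul a r) := by
  induction t with
  | one => simp [Expr.factors] at ha
  | elem | loop =>
    obtain rfl := List.mem_singleton.mp ha
    exact ⟨.one, (ACEquiv.one_mul _).symm.trans (.comm _ _)⟩
  | mul t s iht ihs =>
    rcases List.mem_append.mp ha with ha | ha
    · obtain ⟨r, hr⟩ := iht ha
      exact ⟨.mul r s, hr.mul_right_reassoc s⟩
    · obtain ⟨r, hr⟩ := ihs ha
      exact ⟨.mul r t, (ACEquiv.comm t s).trans (hr.mul_right_reassoc t)⟩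

end ACEquiv

section

variable {T ι : Type} [DecidableEq ι]

theorem exists_cong_elemCount_lt_of_factor_cong {t a r b : Expr T ι} (ht : t.WellFormed)
    (htar : ACEquiv t (.mul a r)) (hab : Cong a b)
    (hle : ∀ k, b.supCount k ≤ a.supCount k ∧ b.subCount k ≤ a.subCount k)
    (hlt : b.elemCount < a.elemCount) :
    ∃ s : Expr T ι, Cong t s ∧ s.WellFormed ∧ s.elemCount < t.elemCount := by
  refine ⟨.mul b r, htar.cong.trans (hab.mul_congr (.refl r)), ht.of_counts_le fun k => ?_, ?_⟩
  · rw [htar.supCount_eq, htar.subCount_eq]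
    simp only [Expr.supCount, Expr.subCount]
    constructor <;> linarith [hle k]
  · rw [htar.elemCount_eq]
    exact Nat.add_lt_add_right hlt _

theorem exists_cong_elemCount_lt_of_bound_index {t : Expr T ι} (ht : t.WellFormed) {j : ι}
    (hsup : t.supCount j ≠ 0) (hsub : t.subCount j ≠ 0) :
    ∃ s : Expr T ι, Cong t s ∧ s.WellFormed ∧ s.elemCount < t.elemCount := by
  obtain ⟨u, i, hu⟩ := Expr.exists_elem_mem_factors_of_supCount_ne_zero hsup
  obtain ⟨r, hr⟩ := ACEquiv.exists_of_mem_factors hu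
  by_cases hij : i = j
  · subst hij
    refine exists_cong_elemCount_lt_of_factor_cong ht hr (.loopify u i) (fun k => ?_) Nat.one_pos
    simp [Expr.supCount, Expr.subCount]
  · have hsub_r : r.subCount j ≠ 0 := by
      rw [congrFun hr.subCount_eq j] at hsub
      simpa [Expr.subCount, hij] using hsub
    obtain ⟨v, k, hv⟩ := Expr.exists_elem_mem_factors_of_subCount_ne_zero hsub_r
    obtain ⟨r', hr'⟩ := ACEquiv.exists_of_mem_factors hv
    have hpair : ACEquiv t (.mul (.mul (.elem u i j) (.elem v j k)) r') :=
      hr.trans (((ACEquiv.refl _).mul_congr hr').trans (.symm (.assoc _ _ _)))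
    have hjk : j ≠ k := by
      rintro rfl
      have := (ht j).1
      simp only [hpair.supCount_eq, Expr.supCount, if_true] at this
      omega
    refine exists_cong_elemCount_lt_of_factor_cong ht hpair (.concat u v i j k hij hjk)
      (fun m => ?_) (by simp [Expr.elemCount])
    simp only [Expr.supCount, Expr.subCount]
    constructor <;> split_ifs <;> omega

end

/-- Every tensor term expression is congruent to a normal one
(one containing no bound indices). -/
theorem stmt2 {T ι : Type} [DecidableEq ι] (t : Expr T ι) (ht : t.WellFormed) :
    ∃ s : Expr T ι, Cong t s ∧ s.Normal := by
  induction hn : t.elemCount using Nat.strong_induction_on generalizing t with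
  | _ n ih =>
    by_cases hN : t.Normal
    · exact ⟨t, .refl t, hN⟩
    obtain ⟨j, hsup, hsub⟩ : ∃ j, t.supCount j ≠ 0 ∧ t.subCount j ≠ 0 := by
      simpa [Expr.Normal] using hN
    obtain ⟨s, hts, hs, hlt⟩ := exists_cong_elemCount_lt_of_bound_index ht hsup hsub
    obtain ⟨s', hss', hs'⟩ := ih _ (hn ▸ hlt) s hs rfl
    exact ⟨s', hts.trans hss', hs'⟩

end TensorPaper
end

section
/- In ETTC, the ∇-inversion rule is admissible: if t ⊢ Γ, ∇^α_β A is derivable (where α was a free lower index and β a free upper index of A), then δ^α_β · t ⊢ Γ, A is derivable. -/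
set_option autoImplicit false

namespace TensorPaper

/-- Extended tensor types: tensor types together with the binding operators
`nabla a b A` (∇, binding the free lower index `a` and the free upper index `b`
of `A`) and `tri a b A` (△, binding likewise). -/
inductive ETy (P ι : Type) : Type
  | pos : P → List ι → List ι → ETy P ι
  | neg : P → List ι → List ι → ETy P ι
  | tens : ETy P ι → ETy P ι → ETy P ι
  | par : ETy P ι → ETy P ι → ETy P ι
  | nabla : ι → ι → ETy P ι → ETy P ι
  | tri : ι → ι → ETy P ι → ETy P ι

namespace ETy

variable {P ι : Type}

/-- duality of extended tensor types; it exchanges ∇ and △ -/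
def dual : ETy P ι → ETy P ι
  | pos p I J => neg p J.reverse I.reverse
  | neg p I J => pos p J.reverse I.reverse
  | tens A B => par B.dual A.dual
  | par A B => tens B.dual A.dual
  | nabla a b A => tri b a A.dual
  | tri a b A => nabla b a A.dual

variable [DecidableEq ι]

/-- free upper indices of an extended tensor type -/
def sups : ETy P ι → List ι
  | pos _ I _ => I
  | neg _ I _ => I
  | tens A B => A.sups ++ B.sups
  | par A B => A.sups ++ B.sups
  | nabla _ b A => A.sups.erase b
  | tri _ b A => A.sups.erase b

/-- free lower indices of an extended tensor type -/
def subs : ETy P ι → List ι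
  | pos _ _ J => J
  | neg _ _ J => J
  | tens A B => A.subs ++ B.subs
  | par A B => A.subs ++ B.subs
  | nabla a _ A => A.subs.erase a
  | tri a _ A => A.subs.erase a

end ETy

def ETy.rename {P ι : Type} (f : ι → ι) : ETy P ι → ETy P ι
  | .pos p I J => .pos p (I.map f) (J.map f)
  | .neg p I J => .neg p (I.map f) (J.map f)
  | .tens A B => .tens (A.rename f) (B.rename f)
  | .par A B => .par (A.rename f) (B.rename f)
  | .nabla a b A => .nabla (f a) (f b) (A.rename f)
  | .tri a b A => .tri (f a) (f b) (A.rename f)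

end TensorPaper
namespace TensorPaper

/-- Derivability in extended tensor type calculus ETTC.  The flag `lam` imposes
the Lambek restriction (nonempty context) on the (∇) rule; the flag `c` tells
whether the Cut rule is allowed. -/
inductive EDeriv {T ι P : Type} [DecidableEq ι] (v : P → ℕ × ℕ) (lam c : Bool) :
    Expr T ι → List (ETy P ι) → Prop
  | ax (p : P) (I J I' J' : List ι)
      (hI : I.length = (v p).2) (hJ : J.length = (v p).1)
      (hI' : I'.length = I.length) (hJ' : J'.length = J.length)
      (hnd : (I ++ J ++ I' ++ J').Nodup) :
      EDeriv v lam c (deltasLU (I.reverse ++ J') (I' ++ J.reverse))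
        [ETy.neg p I J, ETy.pos p J' I']
  | cut {t s : Expr T ι} {Γ Θ : List (ETy P ι)} {A : ETy P ι} (hc : c = true) :
      EDeriv v lam c t (Γ ++ [A]) → EDeriv v lam c s (A.dual :: Θ) →
      EDeriv v lam c (.mul t s) (Γ ++ Θ)
  | parR {t : Expr T ι} {Γ : List (ETy P ι)} {A B : ETy P ι} :
      EDeriv v lam c t (Γ ++ [A, B]) → EDeriv v lam c t (Γ ++ [ETy.par A B])
  | tensR {t s : Expr T ι} {Γ Θ : List (ETy P ι)} {A B : ETy P ι} :
      EDeriv v lam c t (Γ ++ [A]) → EDeriv v lam c s (B :: Θ) →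
      EDeriv v lam c (.mul t s) (Γ ++ [ETy.tens A B] ++ Θ)
  | perm {t : Expr T ι} {Γ Δ : List (ETy P ι)} :
      EDeriv v lam c t Γ → Γ.Perm Δ → EDeriv v lam c t Δ
  | congr {t s : Expr T ι} {Γ : List (ETy P ι)} :
      EDeriv v lam c t Γ → Cong t s → EDeriv v lam c s Γ
  | alpha {t : Expr T ι} {Γ : List (ETy P ι)} (f : ι → ι)
      (hf : Function.Injective f) :
      EDeriv v lam c t Γ → EDeriv v lam c (t.rename f) (Γ.map (ETy.rename f))
  | nablaR {t : Expr T ι} {Γ : List (ETy P ι)} {A : ETy P ι} (a b : ι)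
      (ha : a ∈ A.subs) (hb : b ∈ A.sups) (hres : lam = true → Γ ≠ []) :
      EDeriv v lam c (.mul (.elem [] b a) t) (Γ ++ [A]) →
      EDeriv v lam c t (Γ ++ [ETy.nabla a b A])
  | triR {t : Expr T ι} {Γ : List (ETy P ι)} {A : ETy P ι} (a b : ι)
      (ha : a ∈ A.subs) (hb : b ∈ A.sups) :
      EDeriv v lam c t (Γ ++ [A]) →
      EDeriv v lam c (.mul (.elem [] a b) t) (Γ ++ [ETy.tri a b A])

end TensorPaper
namespace TensorPaper

/-!
Induction on the derivation, with the ∇-formula allowed anywhere in the context up to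
permutation. Where it is principal in a (∇) rule, the premise is already the claim. Otherwise
it is passive: invert it in the premise that carries it and reapply the rule; the new
δ is then moved to the front of the term by associativity and commutativity of congruence.
-/

theorem Cong.mul_left_comm {T ι : Type} (t s u : Expr T ι) :
    Cong (.mul t (.mul s u)) (.mul s (.mul t u)) :=
  (Cong.assoc t s u).symm.trans
    ((Cong.mul_congr (Cong.comm t s) (Cong.refl u)).trans (Cong.assoc s t u))

section Perm

variable {α : Type} [DecidableEq α] {L R Γ : List α} {N : α}

theorem perm_cons_erase_append_of_mem_left (A : α) (hN : N ∈ L)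
    (h : (L ++ R).Perm (N :: Γ)) : ((A :: L.erase N) ++ R).Perm (A :: Γ) :=
  ((List.perm_cons_erase hN).append_right R |>.symm.trans h).cons_inv.cons A

theorem perm_cons_append_erase_of_mem_right (A : α) (hN : N ∈ R)
    (h : (L ++ R).Perm (N :: Γ)) : (L ++ A :: R.erase N).Perm (A :: Γ) :=
  have hR : (L ++ R).Perm (N :: (L ++ R.erase N)) :=
    ((List.perm_cons_erase hN).append_left L).trans List.perm_middle
  List.perm_middle.trans ((hR.symm.trans h).cons_inv.cons A)

end Perm

namespace EDeriv

variable {T ι P : Type} [DecidableEq ι] {v : P → ℕ × ℕ} {lam c : Bool}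

theorem nabla_inv_of_perm {t : Expr T ι} {Δ : List (ETy P ι)}
    (h : EDeriv v lam c t Δ) {Γ : List (ETy P ι)} {A : ETy P ι} {a b : ι}
    (hΔ : Δ.Perm (ETy.nabla a b A :: Γ)) :
    EDeriv v lam c (.mul (.elem [] b a) t) (A :: Γ) := by
  classical
  induction h generalizing Γ A a b with
  | ax => simpa using hΔ.mem_iff.2 List.mem_cons_self
  | @cut t s L Θ C hc h₁ h₂ ih₁ ih₂ =>
    rcases List.mem_append.1 (hΔ.mem_iff.2 List.mem_cons_self) with hL | hΘ
    · have d := ih₁ ((List.perm_cons_erase hL).append_right [C])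
      exact ((cut hc d h₂).congr (Cong.assoc ..)).perm
        (perm_cons_erase_append_of_mem_left A hL hΔ)
    · have d := ih₂ (((List.perm_cons_erase hΘ).cons _).trans (.swap ..))
      exact ((cut hc h₁ (d.perm (.swap ..))).congr (Cong.mul_left_comm ..)).perm
        (perm_cons_append_erase_of_mem_right A hΘ hΔ)
  | @parR t L C B _ ih =>
    have hL : ETy.nabla a b A ∈ L := by simpa using hΔ.mem_iff.2 List.mem_cons_self
    exact (parR (Γ := A :: L.erase _) (ih ((List.perm_cons_erase hL).append_right [C, B]))).perm
      (perm_cons_erase_append_of_mem_left A hL hΔ)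
  | @tensR t s L Θ C B h₁ h₂ ih₁ ih₂ =>
    have hN : ETy.nabla a b A ∈ L ∨ ETy.nabla a b A ∈ Θ := by
      simpa using hΔ.mem_iff.2 List.mem_cons_self
    rcases hN with hL | hΘ
    · have d := tensR (Γ := A :: L.erase _)
        (ih₁ ((List.perm_cons_erase hL).append_right [C])) h₂
      rw [List.append_assoc] at d hΔ
      exact (d.congr (Cong.assoc ..)).perm (perm_cons_erase_append_of_mem_left A hL hΔ)
    · have d := ih₂ (((List.perm_cons_erase hΘ).cons _).trans (.swap ..))
      exact ((tensR h₁ (d.perm (.swap ..))).congr (Cong.mul_left_comm ..)).perm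
        (perm_cons_append_erase_of_mem_right A hΘ hΔ)
  | perm _ hp ih => exact ih (hp.trans hΔ)
  | congr _ hts ih => exact (ih hΔ).congr (Cong.mul_congr (Cong.refl _) hts)
  | @alpha t L f hf _ ih =>
    obtain ⟨X, hX, hXN⟩ := List.mem_map.1 (hΔ.mem_iff.2 List.mem_cons_self)
    rcases X with _ | _ | _ | _ | ⟨a', b', A'⟩ | _ <;>
      simp only [ETy.rename, reduceCtorEq, ETy.nabla.injEq] at hXN
    obtain ⟨rfl, rfl, rfl⟩ := hXN
    have hL := List.perm_cons_erase hX
    exact (alpha f hf (ih hL)).perm (((hL.map _).symm.trans hΔ).cons_inv.cons _)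
  | @nablaR t L A₀ a₀ b₀ ha₀ hb₀ _ h₁ ih =>
    rcases List.mem_append.1 (hΔ.mem_iff.2 List.mem_cons_self) with hL | hN
    · have d := ih ((List.perm_cons_erase hL).append_right [A₀])
      -- the Lambek restriction holds: the context now contains `A`
      exact (nablaR (Γ := A :: L.erase _) a₀ b₀ ha₀ hb₀ (fun _ => List.cons_ne_nil _ _)
        (d.congr (Cong.mul_left_comm ..))).perm (perm_cons_erase_append_of_mem_left A hL hΔ)
    · obtain ⟨rfl, rfl, rfl⟩ : a = a₀ ∧ b = b₀ ∧ A = A₀ := by simpa using hN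
      have hL := ((List.perm_append_singleton _ L).symm.trans hΔ).cons_inv
      exact h₁.perm ((List.perm_append_singleton A L).trans (hL.cons A))
  | @triR t L A₀ a₀ b₀ ha₀ hb₀ _ ih =>
    have hL : ETy.nabla a b A ∈ L := by simpa using hΔ.mem_iff.2 List.mem_cons_self
    have d := ih ((List.perm_cons_erase hL).append_right [A₀])
    exact ((triR a₀ b₀ ha₀ hb₀ d).congr (Cong.mul_left_comm ..)).perm
      (perm_cons_erase_append_of_mem_left A hL hΔ)

end EDeriv

theorem stmt15_general {T ι P : Type} [DecidableEq ι] (v : P → ℕ × ℕ)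
    {t : Expr T ι} {Γ : List (ETy P ι)} {A : ETy P ι} {a b : ι}
    (h : EDeriv v false true t (Γ ++ [ETy.nabla a b A])) :
    EDeriv v false true (.mul (.elem [] b a) t) (Γ ++ [A]) :=
  (h.nabla_inv_of_perm (List.perm_append_singleton _ _)).perm
    (List.perm_append_singleton _ _).symm

/-- The ∇-inversion rule is admissible in ETTC. -/
theorem stmt15 {T ι P : Type} [DecidableEq ι] (v : P → ℕ × ℕ)
    {t : Expr T ι} {Γ : List (ETy P ι)} {A : ETy P ι} {a b : ι}
    (ha : a ∈ A.subs) (hb : b ∈ A.sups)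
    (h : EDeriv v false true t (Γ ++ [ETy.nabla a b A])) :
    EDeriv v false true (.mul (.elem [] b a) t) (Γ ++ [A]) :=
  stmt15_general v h

end TensorPaper
end
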